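/- arXiv:1606.00384 — 2 statements merged into one kernel-verified Lean document; each statement's English description precedes it below -/
import Mathlib

section
/- Let f : R^{1+n} → C^{1+n} be a C^1 vector field such that |f| and all |∂f_i/∂x^j| are bounded by C(1+|x|)^{-1-ε} for some ε > 0, C > 0. Define Lf(x,θ) = ∫_R f(s, x+sθ)·(1,θ) ds for x ∈ R^n, θ ∈ S^{n-1}. Then for any v ∈ R^n, (v·∇_x)Lf(x,θ) = ∫_R g(s,x+sθ)·(1,θ) ds, where g_i(z) = Σ_{j≠i} (∂_j f_i − ∂_i f_j)(z) · w^j with w = (0,v) ∈ R^{1+n} (indexing coordinates 0,…,n, with coordinate 0 being time). -/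
/-!
Differentiating under the integral sign, dominated by the integrable weight `(1 + |s|)^{-1-ε}`,
gives `(v·∇ₓ)Lf(x,θ) = ∫ ⟨Df(γ(s)) w, (1,θ)⟩ ds` with `w = (0,v)`. Subtracting the transposed
term `⟨Df(γ(s)) (1,θ), w⟩` leaves exactly the curl term. Since `γ'(s) = (1,θ)`, the transposed
term is `d/ds ⟨f(γ(s)), w⟩`; by the decay of `f` and `Df` both `⟨f(γ(s)), w⟩` and its derivative
are integrable, so the derivative integrates to zero.
-/

open MeasureTheory

/-- The light ray `γ_{x,θ}(s) = (s, x + sθ)` as a point of `ℝ^{1+n}` (coordinate `0` is time). -/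
noncomputable def lightRay (n : ℕ) (x θ : Fin n → ℝ) (s : ℝ) : Fin (n + 1) → ℝ :=
  Fin.cons s (fun k => x k + s * θ k)

/-- The direction `(1,θ) ∈ ℝ^{1+n}`, viewed in `ℂ^{1+n}`. -/
noncomputable def lightDir (n : ℕ) (θ : Fin n → ℝ) : Fin (n + 1) → ℂ :=
  Fin.cons 1 (fun k => (θ k : ℂ))

/-- Partial derivative in the `j`-th coordinate direction. -/
noncomputable def pd (n : ℕ) (F : (Fin (n + 1) → ℝ) → ℂ) (j : Fin (n + 1))
    (z : Fin (n + 1) → ℝ) : ℂ :=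
  fderiv ℝ F z (Pi.single j 1)

theorem integrable_one_add_abs_rpow_neg {r : ℝ} (hr : 1 < r) :
    Integrable fun s : ℝ => (1 + |s|) ^ (-r) := by
  simpa [Real.norm_eq_abs] using
    integrable_one_add_norm (E := ℝ) (μ := volume) (r := r) (by simpa using hr)

theorem Continuous.integrable_of_norm_le_one_add_abs_rpow_neg {E : Type*}
    [NormedAddCommGroup E] {g : ℝ → E} (hg : Continuous g) {K r : ℝ} (hr : 1 < r)
    (hbound : ∀ s, ‖g s‖ ≤ K * (1 + |s|) ^ (-r)) : Integrable g :=
  ((integrable_one_add_abs_rpow_neg hr).const_mul K).mono' hg.aestronglyMeasurable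
    (.of_forall hbound)

section ParametricIntegral

variable {W V F : Type*} [NormedAddCommGroup W] [NormedSpace ℝ W] [NormedAddCommGroup V]
  [NormedSpace ℝ V] [NormedAddCommGroup F] [NormedSpace ℝ F]
  {h : V → F} {h' : V → V →L[ℝ] F} {γ : W → ℝ → V} {L : W →L[ℝ] V} {B : ℝ → ℝ}

theorem hasFDerivAt_integral_comp (hh : ∀ z, HasFDerivAt h (h' z) z) (hh' : Continuous h')
    (hγ : ∀ y s, HasFDerivAt (γ · s) L y) (hγc : ∀ y, Continuous (γ y)) (hB : Integrable B)
    (x : W) (hbound : ∀ s, ‖h (γ x s)‖ ≤ B s) (hbound' : ∀ y s, ‖h' (γ y s)‖ ≤ B s) :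
    HasFDerivAt (fun y => ∫ s, h (γ y s)) (∫ s, h' (γ x s) ∘L L) x := by
  have hc : Continuous h := continuous_iff_continuousAt.2 fun z => (hh z).continuousAt
  refine hasFDerivAt_integral_of_dominated_of_fderiv_le (bound := fun s => B s * ‖L‖)
    Filter.univ_mem (.of_forall fun y => (hc.comp (hγc y)).aestronglyMeasurable)
    (hB.mono' (hc.comp (hγc x)).aestronglyMeasurable (.of_forall hbound))
    ((hh'.comp (hγc x)).clm_comp continuous_const).aestronglyMeasurable
    (.of_forall fun s y _ => ?_) (hB.mul_const _)
    (.of_forall fun s y _ => (hh _).comp y (hγ y s))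
  exact (ContinuousLinearMap.opNorm_comp_le _ _).trans
    (mul_le_mul_of_nonneg_right (hbound' y s) (norm_nonneg L))

theorem fderiv_integral_comp_apply (hh : ∀ z, HasFDerivAt h (h' z) z) (hh' : Continuous h')
    (hγ : ∀ y s, HasFDerivAt (γ · s) L y) (hγc : ∀ y, Continuous (γ y)) (hB : Integrable B)
    (x : W) (hbound : ∀ s, ‖h (γ x s)‖ ≤ B s) (hbound' : ∀ y s, ‖h' (γ y s)‖ ≤ B s) (v : W) :
    fderiv ℝ (fun y => ∫ s, h (γ y s)) x v = ∫ s, h' (γ x s) (L v) := by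
  rw [(hasFDerivAt_integral_comp hh hh' hγ hγc hB x hbound hbound').fderiv]
  refine ContinuousLinearMap.integral_apply ?_ v
  exact (hB.mul_const ‖L‖).mono'
    ((hh'.comp (hγc x)).clm_comp continuous_const).aestronglyMeasurable
    (.of_forall fun s => (ContinuousLinearMap.opNorm_comp_le _ _).trans
      (mul_le_mul_of_nonneg_right (hbound' x s) (norm_nonneg L)))

end ParametricIntegral

noncomputable def pairingCLM {ι : Type*} [Fintype ι] (c : ι → ℂ) : (ι → ℂ) →L[ℝ] ℂ :=
  ∑ i, c i • ContinuousLinearMap.proj i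

@[simp]
theorem pairingCLM_apply {ι : Type*} [Fintype ι] (c a : ι → ℂ) :
    pairingCLM c a = ∑ i, a i * c i := by
  simp [pairingCLM, mul_comm]

theorem Finset.sum_sum_sdiff_sub_mul {ι R : Type*} [Fintype ι] [DecidableEq ι] [CommRing R]
    (M : ι → ι → R) (a b : ι → R) :
    ∑ i, (∑ j ∈ univ \ {i}, (M i j - M j i) * a j) * b i
      = ∑ i, (∑ j, M i j * a j) * b i - ∑ j, (∑ i, M j i * b i) * a j := by
  have hdiag : ∀ i, ∑ j ∈ univ \ {i}, (M i j - M j i) * a j = ∑ j, (M i j - M j i) * a j :=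
    fun i => sum_subset sdiff_subset fun j _ hj => by
      obtain rfl : j = i := by simpa using hj
      ring
  simp only [hdiag]
  simp only [sub_mul, sum_sub_distrib, sum_mul]
  congr 1
  rw [sum_comm]
  exact sum_congr rfl fun j _ => sum_congr rfl fun i _ => by ring

section LightRay

variable {n : ℕ}

theorem abs_le_norm_lightRay (y θ : Fin n → ℝ) (s : ℝ) : |s| ≤ ‖lightRay n y θ s‖ := by
  simpa [lightRay, Real.norm_eq_abs] using norm_le_pi_norm (lightRay n y θ s) 0

theorem hasDerivAt_lightRay (y θ : Fin n → ℝ) (s : ℝ) :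
    HasDerivAt (lightRay n y θ) (Fin.cons 1 θ) s := by
  refine (hasDerivAt_id s).finCons (hasDerivAt_pi.2 fun k => ?_)
  simpa using ((hasDerivAt_id s).mul_const (θ k)).const_add (y k)

theorem continuous_lightRay (y θ : Fin n → ℝ) : Continuous (lightRay n y θ) :=
  continuous_iff_continuousAt.2 fun s => (hasDerivAt_lightRay y θ s).continuousAt

theorem hasFDerivAt_lightRay (θ : Fin n → ℝ) (s : ℝ) (y : Fin n → ℝ) :
    HasFDerivAt (fun y => lightRay n y θ s)
      ((0 : (Fin n → ℝ) →L[ℝ] ℝ).finCons (.id ℝ (Fin n → ℝ))) y :=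
  (hasFDerivAt_const s y).finCons ((hasFDerivAt_id y).add_const fun k => s * θ k)

theorem norm_comp_lightRay_le {E : Type*} [NormedAddCommGroup E]
    {g : (Fin (n + 1) → ℝ) → E} {C r : ℝ} (hr : 0 ≤ r)
    (hg : ∀ z, ‖g z‖ ≤ C * (1 + ‖z‖) ^ (-r)) (y θ : Fin n → ℝ) (s : ℝ) :
    ‖g (lightRay n y θ s)‖ ≤ C * (1 + |s|) ^ (-r) := by
  have hz := hg (lightRay n y θ s)
  have hC : 0 ≤ C := nonneg_of_mul_nonneg_left ((norm_nonneg _).trans hz) (by positivity)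
  refine hz.trans (mul_le_mul_of_nonneg_left (Real.rpow_le_rpow_of_nonpos (by positivity) ?_
    (by linarith)) hC)
  linarith [abs_le_norm_lightRay y θ s]

theorem integrable_comp_lightRay {F : Type*} [NormedAddCommGroup F]
    {g : (Fin (n + 1) → ℝ) → F} {C ε : ℝ} (hg : Continuous g) (hε : 0 < ε)
    (hdecay : ∀ z, ‖g z‖ ≤ C * (1 + ‖z‖) ^ (-(1 + ε))) (y θ : Fin n → ℝ) :
    Integrable fun s => g (lightRay n y θ s) :=
  (hg.comp (continuous_lightRay y θ)).integrable_of_norm_le_one_add_abs_rpow_neg (by linarith)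
    (norm_comp_lightRay_le (by linarith) hdecay y θ)

theorem lightDir_eq (θ : Fin n → ℝ) :
    lightDir n θ = fun i => ((Fin.cons 1 θ : Fin (n + 1) → ℝ) i : ℂ) := by
  ext i
  cases i using Fin.cases <;> simp [lightDir]

theorem fderiv_apply_eq_sum_pd {f : (Fin (n + 1) → ℝ) → Fin (n + 1) → ℂ}
    {z : Fin (n + 1) → ℝ} (hf : DifferentiableAt ℝ f z) (y : Fin (n + 1) → ℝ) (i : Fin (n + 1)) :
    fderiv ℝ f z y i = ∑ j, pd n (fun z => f z i) j z * y j := by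
  have hpd : ∀ j, pd n (fun z => f z i) j z = fderiv ℝ f z (Pi.single j 1) i := fun j => by
    rw [pd, (hasFDerivAt_pi'.1 hf.hasFDerivAt i).fderiv]
    rfl
  have hsingle : ∀ j, (Pi.single j (y j) : Fin (n + 1) → ℝ) = y j • Pi.single j 1 := fun j => by
    rw [← Pi.single_smul', smul_eq_mul, mul_one]
  conv_lhs => rw [← Finset.univ_sum_single y]
  simp [hpd, hsingle, Finset.sum_apply, mul_comm]

theorem sum_curl_pd_mul_eq_sub {f : (Fin (n + 1) → ℝ) → Fin (n + 1) → ℂ}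
    {z : Fin (n + 1) → ℝ} (hf : DifferentiableAt ℝ f z) (u w : Fin (n + 1) → ℝ) :
    ∑ i, (∑ j ∈ Finset.univ \ {i}, (pd n (fun z => f z i) j z - pd n (fun z => f z j) i z)
        * (w j : ℂ)) * (u i : ℂ)
      = pairingCLM (fun i => (u i : ℂ)) (fderiv ℝ f z w)
        - pairingCLM (fun j => (w j : ℂ)) (fderiv ℝ f z u) := by
  simp only [Finset.sum_sum_sdiff_sub_mul, pairingCLM_apply, fderiv_apply_eq_sum_pd hf]

end LightRay

section DecayAlongLightRays

variable {n : ℕ} {E G : Type*} [NormedAddCommGroup E] [NormedSpace ℝ E] [NormedAddCommGroup G]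
  [NormedSpace ℝ G] {f : (Fin (n + 1) → ℝ) → E} {C ε : ℝ}

theorem fderiv_integral_comp_lightRay_apply (hf : ContDiff ℝ 1 f) (hε : 0 < ε)
    (hdecay : ∀ z, ‖f z‖ ≤ C * (1 + ‖z‖) ^ (-(1 + ε)))
    (hdecay' : ∀ z, ‖fderiv ℝ f z‖ ≤ C * (1 + ‖z‖) ^ (-(1 + ε))) (ℓ : E →L[ℝ] G)
    (θ x v : Fin n → ℝ) :
    fderiv ℝ (fun y => ∫ s, ℓ (f (lightRay n y θ s))) x v
      = ∫ s, ℓ (fderiv ℝ f (lightRay n x θ s) (Fin.cons 0 v)) :=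
  fderiv_integral_comp_apply
    (fun z => ℓ.hasFDerivAt.comp z (hf.differentiable one_ne_zero z).hasFDerivAt)
    (continuous_const.clm_comp (hf.continuous_fderiv one_ne_zero))
    (fun y s => hasFDerivAt_lightRay θ s y) (continuous_lightRay · θ)
    (((integrable_one_add_abs_rpow_neg (by linarith)).const_mul C).const_mul ‖ℓ‖) x
    (fun s => ℓ.le_opNorm_of_le (norm_comp_lightRay_le (by linarith) hdecay x θ s))
    (fun y s => (ℓ.opNorm_comp_le _).trans (mul_le_mul_of_nonneg_left
      (norm_comp_lightRay_le (by linarith) hdecay' y θ s) (norm_nonneg ℓ))) v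

theorem integral_fderiv_along_lightRay_eq_zero (hf : ContDiff ℝ 1 f) (hε : 0 < ε)
    (hdecay : ∀ z, ‖f z‖ ≤ C * (1 + ‖z‖) ^ (-(1 + ε)))
    (hdecay' : ∀ z, ‖fderiv ℝ f z‖ ≤ C * (1 + ‖z‖) ^ (-(1 + ε))) (ℓ : E →L[ℝ] G)
    (θ x : Fin n → ℝ) :
    ∫ s, ℓ (fderiv ℝ f (lightRay n x θ s) (Fin.cons 1 θ)) = 0 :=
  integral_eq_zero_of_hasDerivAt_of_integrable
    (fun s => (ℓ.hasFDerivAt.comp _ (hf.differentiable one_ne_zero _).hasFDerivAt).comp_hasDerivAt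
      s (hasDerivAt_lightRay x θ s))
    (ℓ.integrable_comp ((integrable_comp_lightRay (hf.continuous_fderiv one_ne_zero) hε hdecay'
      x θ).apply_continuousLinearMap _))
    (ℓ.integrable_comp (integrable_comp_lightRay hf.continuous hε hdecay x θ))

end DecayAlongLightRays

theorem stmt_1_general (n : ℕ) (f : (Fin (n + 1) → ℝ) → Fin (n + 1) → ℂ)
    (hf : ContDiff ℝ 1 f) (C ε : ℝ) (hε : 0 < ε)
    (hdecay : ∀ z, ‖f z‖ ≤ C * (1 + ‖z‖) ^ (-(1 + ε)))
    (hdecay' : ∀ z, ‖fderiv ℝ f z‖ ≤ C * (1 + ‖z‖) ^ (-(1 + ε)))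
    (θ : Fin n → ℝ) (x v : Fin n → ℝ) :
    fderiv ℝ (fun y : Fin n → ℝ =>
        ∫ s : ℝ, ∑ i, f (lightRay n y θ s) i * lightDir n θ i) x v
      = ∫ s : ℝ, ∑ i,
          (∑ j ∈ Finset.univ \ {i},
            (pd n (fun z => f z i) j (lightRay n x θ s)
              - pd n (fun z => f z j) i (lightRay n x θ s))
            * ((Fin.cons 0 v : Fin (n + 1) → ℝ) j : ℂ))
          * lightDir n θ i := by
  set u : Fin (n + 1) → ℝ := Fin.cons 1 θ with hu
  set w : Fin (n + 1) → ℝ := Fin.cons 0 v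
  set ℓu := pairingCLM fun i => (u i : ℂ)
  set ℓw := pairingCLM fun j => (w j : ℂ)
  have hLf : (fun y => ∫ s, ∑ i, f (lightRay n y θ s) i * lightDir n θ i)
      = fun y => ∫ s, ℓu (f (lightRay n y θ s)) := by
    simp [ℓu, u, lightDir_eq]
  have hcurl (s : ℝ) :=
    sum_curl_pd_mul_eq_sub (hf.differentiable one_ne_zero (lightRay n x θ s)) u w
  have hDfγ := integrable_comp_lightRay (hf.continuous_fderiv one_ne_zero) hε hdecay' x θ
  rw [hLf, fderiv_integral_comp_lightRay_apply hf hε hdecay hdecay', lightDir_eq, ← hu]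
  simp only [hcurl]
  rw [integral_sub (ℓu.integrable_comp (hDfγ.apply_continuousLinearMap w))
      (ℓw.integrable_comp (hDfγ.apply_continuousLinearMap u)),
    integral_fderiv_along_lightRay_eq_zero hf hε hdecay hdecay', sub_zero]

/-- Let `f : ℝ^{1+n} → ℂ^{1+n}` be `C¹` with `|f|` and `|∂f|` bounded by `C(1+|z|)^{-1-ε}`,
and `Lf(x,θ) = ∫_ℝ f(s,x+sθ)·(1,θ) ds`. Then for any `v ∈ ℝ^n`,
`(v·∇_x)Lf(x,θ) = ∫_ℝ g(s,x+sθ)·(1,θ) ds`, where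
`g_i(z) = Σ_{j≠i} (∂_j f_i − ∂_i f_j)(z) w^j` with `w = (0,v)`. -/
theorem stmt_1 (n : ℕ) (f : (Fin (n + 1) → ℝ) → Fin (n + 1) → ℂ)
    (hf : ContDiff ℝ 1 f) (C ε : ℝ) (hC : 0 < C) (hε : 0 < ε)
    (hdecay : ∀ z, ‖f z‖ ≤ C * (1 + ‖z‖) ^ (-(1 + ε)))
    (hdecay' : ∀ z, ‖fderiv ℝ f z‖ ≤ C * (1 + ‖z‖) ^ (-(1 + ε)))
    (θ : Fin n → ℝ) (hθ : ∑ i, θ i * θ i = 1) (x v : Fin n → ℝ) :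
    fderiv ℝ (fun y : Fin n → ℝ =>
        ∫ s : ℝ, ∑ i, f (lightRay n y θ s) i * lightDir n θ i) x v
      = ∫ s : ℝ, ∑ i,
          (∑ j ∈ Finset.univ \ {i},
            (pd n (fun z => f z i) j (lightRay n x θ s)
              - pd n (fun z => f z j) i (lightRay n x θ s))
            * ((Fin.cons 0 v : Fin (n + 1) → ℝ) j : ℂ))
          * lightDir n θ i :=
  stmt_1_general n f hf C ε hε hdecay hdecay' θ x v
end

section
/- Solenoidal obstruction example (n = 2): Let ζ = (τ, ξ) ∈ R^{1+2} be space-like (τ² < |ξ|²) and set η(ζ) = (1, ξ²/√(|ξ|²−τ²), −ξ¹/√(|ξ|²−τ²)). Then η(ζ) is a nonzero vector in C^{1+2} satisfying (1, θ_+(ζ))·η(ζ) = 0 while (1, θ_−(ζ))·η(ζ) ≠ 0, where θ_±(ζ) = (1/|ξ|²)(−τξ¹ ∓ √(|ξ|²−τ²) ξ², −τξ² ± √(|ξ|²−τ²) ξ¹). -/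
/-!
With `q = |ξ|²`, `θ_± = (-τ ξ ± r ξ^⊥) / q` for `ξ^⊥ = (-ξ², ξ¹)`, while the spatial part of `η` is
`-ξ^⊥ / r`. Since `ξ ⊥ ξ^⊥` and `|ξ^⊥|² = q`, the spatial dot product `θ_± · (-ξ^⊥ / r)` is `∓1`,
so `(1, θ_±) · η` is `0` for `+` and `2` for `-`.
-/

lemma thetaPlus_dot_rotated (τ ξ1 ξ2 r : ℝ) (hq : ξ1 ^ 2 + ξ2 ^ 2 ≠ 0) (hr : r ≠ 0) :
    (-τ * ξ1 - r * ξ2) / (ξ1 ^ 2 + ξ2 ^ 2) * (ξ2 / r)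
      + (-τ * ξ2 + r * ξ1) / (ξ1 ^ 2 + ξ2 ^ 2) * (-ξ1 / r) = -1 := by
  field_simp
  ring

lemma thetaMinus_dot_rotated (τ ξ1 ξ2 r : ℝ) (hq : ξ1 ^ 2 + ξ2 ^ 2 ≠ 0) (hr : r ≠ 0) :
    (-τ * ξ1 + r * ξ2) / (ξ1 ^ 2 + ξ2 ^ 2) * (ξ2 / r)
      + (-τ * ξ2 - r * ξ1) / (ξ1 ^ 2 + ξ2 ^ 2) * (-ξ1 / r) = 1 := by
  field_simp
  ring

/-- Solenoidal obstruction example for `n = 2`: for a space-like `ζ = (τ,ξ)`, the vector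
`η(ζ) = (1, ξ²/√(|ξ|²−τ²), −ξ¹/√(|ξ|²−τ²)) ∈ ℂ^{1+2}` is nonzero, satisfies
`(1,θ₊(ζ))·η(ζ) = 0`, but `(1,θ₋(ζ))·η(ζ) ≠ 0`. -/
theorem stmt_12 (τ ξ1 ξ2 : ℝ) (hs : τ ^ 2 < ξ1 ^ 2 + ξ2 ^ 2) :
    let q : ℝ := ξ1 ^ 2 + ξ2 ^ 2
    let r : ℝ := Real.sqrt (q - τ ^ 2)
    let θp : ℝ × ℝ := ((-τ * ξ1 - r * ξ2) / q, (-τ * ξ2 + r * ξ1) / q)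
    let θm : ℝ × ℝ := ((-τ * ξ1 + r * ξ2) / q, (-τ * ξ2 - r * ξ1) / q)
    let η : ℂ × ℂ × ℂ := (1, ((ξ2 / r : ℝ) : ℂ), ((-ξ1 / r : ℝ) : ℂ))
    η ≠ 0 ∧
    (1 : ℂ) * η.1 + (θp.1 : ℂ) * η.2.1 + (θp.2 : ℂ) * η.2.2 = 0 ∧
    (1 : ℂ) * η.1 + (θm.1 : ℂ) * η.2.1 + (θm.2 : ℂ) * η.2.2 ≠ 0 := by
  intro q r θp θm η
  have hq : q ≠ 0 := (lt_of_le_of_lt (sq_nonneg τ) hs).ne'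
  have hr : r ≠ 0 := (Real.sqrt_pos.mpr (sub_pos.mpr hs)).ne'
  refine ⟨fun h => one_ne_zero (congrArg Prod.fst h), ?_, ?_⟩
  · simp only [η]
    have := thetaPlus_dot_rotated τ ξ1 ξ2 r hq hr
    exact_mod_cast (by linarith : (1 : ℝ) * 1 + θp.1 * (ξ2 / r) + θp.2 * (-ξ1 / r) = 0)
  · simp only [η]
    have := thetaMinus_dot_rotated τ ξ1 ξ2 r hq hr
    exact_mod_cast (by linarith : (1 : ℝ) * 1 + θm.1 * (ξ2 / r) + θm.2 * (-ξ1 / r) ≠ 0)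
end
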